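/- arXiv:1711.04051 — 3 statements merged into one kernel-verified Lean document; each statement's English description precedes it below -/
import Mathlib

section
/- Let G be a torsion-free group with trivial center. If an automorphism φ of G has finite order n ≥ 1, then its image in the outer automorphism group Out(G) = Aut(G)/Inn(G) also has order n. -/
/-!
Trivial centre makes `g ↦ conj g` an isomorphism `G ≃ Inn(G)`, so `Inn(G)` is torsion-free.
If `φ^k` is inner for `k` the order of `φ` in `Out(G)`, then `φ^k` is an inner automorphism of
finite order, hence trivial; so the order of `φ` divides `k`.
-/

instance inn_normal (G : Type*) [Group G] :
    ((MulAut.conj : G →* MulAut G).range).Normal := by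
  constructor
  rintro x ⟨g, rfl⟩ φ
  refine ⟨φ g, ?_⟩
  ext h
  simp [MulAut.conj_apply, MulAut.mul_apply, map_mul]

def Monoid.IsTorsionFree (G : Type*) [Monoid G] : Prop :=
  ∀ g : G, g ≠ 1 → ¬IsOfFinOrder g

theorem MulAut.conj_injective_of_center_eq_bot {G : Type*} [Group G]
    (hZ : Subgroup.center G = ⊥) : Function.Injective (MulAut.conj : G →* MulAut G) := by
  refine (injective_iff_map_eq_one _).mpr fun g hg => ?_
  have hg_central : g ∈ Subgroup.center G := Subgroup.mem_center_iff.mpr fun h =>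
    (mul_inv_eq_iff_eq_mul.mp (DFunLike.congr_fun hg h : g * h * g⁻¹ = h)).symm
  rwa [hZ, Subgroup.mem_bot] at hg_central

theorem orderOf_mk'_eq_of_isOfFinOrder {G : Type*} [Group G] (N : Subgroup G) [N.Normal]
    (hN : ∀ y ∈ N, IsOfFinOrder y → y = 1) {x : G} (hx : IsOfFinOrder x) :
    orderOf (QuotientGroup.mk' N x) = orderOf x := by
  refine Nat.dvd_antisymm (orderOf_map_dvd _ x) (orderOf_dvd_of_pow_eq_one ?_)
  have hmem : x ^ orderOf (QuotientGroup.mk' N x) ∈ N := by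
    rw [← QuotientGroup.eq_one_iff, ← QuotientGroup.mk'_apply, map_pow, pow_orderOf_eq_one]
  exact hN _ hmem hx.pow

theorem eq_one_of_mem_range_conj_of_isOfFinOrder {G : Type*} [Group G]
    (hTF : Monoid.IsTorsionFree G) (hZ : Subgroup.center G = ⊥) {ψ : MulAut G}
    (hψ : ψ ∈ (MulAut.conj : G →* MulAut G).range) (hfin : IsOfFinOrder ψ) : ψ = 1 := by
  obtain ⟨g, rfl⟩ := hψ
  have hg : IsOfFinOrder g :=
    (MulAut.conj_injective_of_center_eq_bot hZ).isOfFinOrder_iff.mp hfin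
  rw [show g = 1 from by_contra fun hne => hTF g hne hg, map_one]

/-- Let `G` be a torsion-free group with trivial center.  If an automorphism
`φ` of `G` has finite order `n ≥ 1`, then its image in
`Out(G) = Aut(G)/Inn(G)` also has order `n`. -/
theorem orderOf_outer_eq {G : Type*} [Group G]
    (hTF : Monoid.IsTorsionFree G) (hZ : Subgroup.center G = ⊥)
    (φ : MulAut G) (n : ℕ) (hn : 1 ≤ n) (hord : orderOf φ = n) :
    orderOf (QuotientGroup.mk' (MulAut.conj : G →* MulAut G).range φ) = n := by
  have hφ : IsOfFinOrder φ := orderOf_pos_iff.mp (hord ▸ hn)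
  rw [orderOf_mk'_eq_of_isOfFinOrder _
    (fun _ hψ => eq_one_of_mem_range_conj_of_isOfFinOrder hTF hZ hψ) hφ, hord]
end

section
/- Let G be the group with presentation ⟨a, b | a^r = b^s⟩ (the group of the (r,s)-torus knot, with r, s coprime and ≥ 2). Then the center of G is the infinite cyclic subgroup generated by a^r = b^s, and the quotient G/Z(G) is isomorphic to the free product ℤ/r * ℤ/s. -/
/-- The relation `a^r = b^s` defining the `(r,s)`-torus knot group
`G = ⟨a, b ∣ a^r = b^s⟩`. -/
def torusKnotRels (r s : ℕ) : Set (FreeGroup (Fin 2)) :=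
  {FreeGroup.of 0 ^ r * (FreeGroup.of 1 ^ s)⁻¹}

/-!
The element `z = a^r = b^s` commutes with both generators, so it is central, and it has infinite
order because `a ↦ s`, `b ↦ r` defines a homomorphism onto `ℤ` sending `z` to `rs`. Killing `z`
turns the relation into `a^r = 1 = b^s`, so `G/⟨z⟩ ≅ ℤ/r ∗ ℤ/s`. A free product of two nontrivial
groups has trivial center: conjugating a central element by the first letter of its reduced word
shows that the word begins and ends in the same factor, and then a letter `g` from another factor
gives different reduced words for `gc` and `cg`. Hence `Z(G) ≤ ⟨z⟩`.
-/

universe u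

open Monoid Monoid.Coprod

theorem Subgroup.normal_of_le_center {G : Type*} [Group G] {H : Subgroup G}
    (h : H ≤ center G) : H.Normal :=
  ⟨fun n hn g => by rwa [mem_center_iff.1 (h hn) g, mul_inv_cancel_right]⟩

theorem Subgroup.center_le_of_center_quotient_eq_bot {G : Type*} [Group G] {N : Subgroup G}
    [N.Normal] (h : center (G ⧸ N) = ⊥) : center G ≤ N := by
  intro g hg
  rw [← QuotientGroup.eq_one_iff, ← mem_bot, ← h, mem_center_iff]
  intro x
  obtain ⟨x, rfl⟩ := QuotientGroup.mk_surjective x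
  rw [← QuotientGroup.mk_mul, ← QuotientGroup.mk_mul, mem_center_iff.1 hg]

theorem Subgroup.center_eq_bot_of_mulEquiv {G H : Type*} [Group G] [Group H] (e : G ≃* H)
    (h : center H = ⊥) : center G = ⊥ := by
  refine (eq_bot_iff_forall _).2 fun c hc => ?_
  have hec : e c ∈ center H := MulEquivClass.apply_mem_center e hc
  rwa [h, mem_bot, map_eq_one_iff e e.injective] at hec

theorem ZMod.ofAdd_one_pow_self (n : ℕ) : Multiplicative.ofAdd (1 : ZMod n) ^ n = 1 := by
  rw [← ofAdd_nsmul, nsmul_one, ZMod.natCast_self, ofAdd_zero]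

def ZMod.powMonoidHom {H : Type*} [Group H] (n : ℕ) (g : H) (hg : g ^ n = 1) :
    Multiplicative (ZMod n) →* H :=
  AddMonoidHom.toMultiplicativeLeft <| ZMod.lift n
    ⟨zmultiplesHom (Additive H) (Additive.ofMul g), by
      rw [zmultiplesHom_apply, natCast_zsmul, ← ofMul_pow, hg, ofMul_one]⟩

@[simp]
theorem ZMod.powMonoidHom_ofAdd_one {H : Type*} [Group H] (n : ℕ) (g : H) (hg : g ^ n = 1) :
    ZMod.powMonoidHom n g hg (Multiplicative.ofAdd 1) = g := by
  rw [powMonoidHom, AddMonoidHom.toMultiplicativeLeft_apply_apply, toAdd_ofAdd, ← Int.cast_one,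
    ZMod.lift_coe]
  simp

theorem MonoidHom.ext_mzmod {n : ℕ} {H : Type*} [Monoid H] {f g : Multiplicative (ZMod n) →* H}
    (h : f (Multiplicative.ofAdd 1) = g (Multiplicative.ofAdd 1)) : f = g :=
  (MonoidHom.cancel_right (f := (Int.castAddHom (ZMod n)).toMultiplicative)
    ZMod.intCast_surjective).1 (MonoidHom.ext_mint (by simpa using h))

namespace Monoid.CoprodI

variable {ι : Type*}

namespace NeWord

variable {M : ι → Type*} [∀ i, Monoid (M i)]

theorem fst_eq_of_prod_eq {i j k l : ι} {w₁ : NeWord M i j} {w₂ : NeWord M k l}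
    (h : w₁.prod = w₂.prod) : i = k := by
  classical
  have hw : w₁.toWord = w₂.toWord := Word.equiv.symm.injective h
  have hhead := congrArg List.head? (congrArg Word.toList hw)
  simp only [toWord, toList_head?, Option.some.injEq] at hhead
  exact congrArg Sigma.fst hhead

theorem exists_prod_eq_singleton_or_cons {i j : ι} (w : NeWord M i j) :
    ∃ x : M i, x ≠ 1 ∧ ((i = j ∧ w.prod = of x) ∨
      ∃ (k : ι) (t : NeWord M k j), k ≠ i ∧ w.prod = of x * t.prod) := by
  induction w with
  | singleton x hx => exact ⟨x, hx, .inl ⟨rfl, prod_singleton x hx⟩⟩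
  | @append i j k l w₁ hjk w₂ ih₁ _ =>
    obtain ⟨x, hx, ⟨rfl, hw₁⟩ | ⟨m, t, hmi, hw₁⟩⟩ := ih₁
    · exact ⟨x, hx, .inr ⟨k, w₂, hjk.symm, by rw [append_prod, hw₁]⟩⟩
    · refine ⟨x, hx, .inr ⟨m, append t hjk w₂, hmi, ?_⟩⟩
      rw [append_prod, append_prod, hw₁, mul_assoc]

end NeWord

theorem center_eq_bot {G : ι → Type*} [∀ i, Group (G i)] [Nontrivial ι]
    [∀ i, Nontrivial (G i)] : Subgroup.center (CoprodI G) = ⊥ := by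
  classical
  refine (Subgroup.eq_bot_iff_forall _).2 fun c hc => ?_
  by_contra hc1
  have hcomm : ∀ g, g * c = c * g := Subgroup.mem_center_iff.1 hc
  obtain ⟨i, j, w, hw⟩ := NeWord.of_word (Word.equiv c) fun h =>
    hc1 (by rw [← Word.equiv.symm_apply_apply c, h]; exact Word.prod_empty)
  obtain rfl : w.prod = c := by rw [NeWord.prod, hw]; exact Word.equiv.symm_apply_apply c
  by_cases hij : i = j
  · subst hij
    obtain ⟨k, hki⟩ := exists_ne i
    obtain ⟨y, hy⟩ := exists_ne (1 : G k)
    have h := hcomm (of y)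
    rw [← NeWord.prod_singleton y hy, ← NeWord.append_prod (hne := hki),
      ← NeWord.append_prod (hne := hki.symm)] at h
    exact hki (NeWord.fst_eq_of_prod_eq h)
  · obtain ⟨x, hx, ⟨hij', -⟩ | ⟨k, t, hki, hwt⟩⟩ := w.exists_prod_eq_singleton_or_cons
    · exact hij hij'
    -- conjugating by the first letter `x` moves it to the end of the reduced word
    have ht : t.prod = (of x)⁻¹ * w.prod := by rw [hwt, inv_mul_cancel_left]
    have h : w.prod = (NeWord.append t (Ne.symm hij) (NeWord.singleton x hx)).prod := by
      rw [NeWord.append_prod, NeWord.prod_singleton, ht, mul_assoc, ← hcomm, inv_mul_cancel_left]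
    exact hki (NeWord.fst_eq_of_prod_eq h).symm

end Monoid.CoprodI

def Monoid.Coprod.mulEquivCoprodI (G : Bool → Type*) [∀ b, Monoid (G b)] :
    G true ∗ G false ≃* CoprodI G :=
  MonoidHom.toMulEquiv (Coprod.lift CoprodI.of CoprodI.of)
    (CoprodI.lift fun | true => Coprod.inl | false => Coprod.inr)
    (Coprod.hom_ext (MonoidHom.ext fun _ => by simp) (MonoidHom.ext fun _ => by simp))
    (CoprodI.ext_hom _ _ fun | true => MonoidHom.ext fun _ => by simp
                             | false => MonoidHom.ext fun _ => by simp)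

theorem Monoid.Coprod.center_eq_bot {M N : Type u} [Group M] [Group N] [Nontrivial M]
    [Nontrivial N] : Subgroup.center (M ∗ N) = ⊥ := by
  let G : Bool → Type u := fun b => bif b then M else N
  let _ : ∀ b, Group (G b) := fun | true => ‹Group M› | false => ‹Group N›
  have _ : ∀ b, Nontrivial (G b) := fun | true => ‹Nontrivial M› | false => ‹Nontrivial N›
  exact Subgroup.center_eq_bot_of_mulEquiv (mulEquivCoprodI G) CoprodI.center_eq_bot

abbrev TorusKnotGroup (r s : ℕ) := PresentedGroup (torusKnotRels r s)

namespace TorusKnotGroup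

variable (r s : ℕ)

abbrev a : TorusKnotGroup r s := .of 0

abbrev b : TorusKnotGroup r s := .of 1

variable {r s}

def lift {H : Type*} [Group H] (x y : H) (h : x ^ r = y ^ s) : TorusKnotGroup r s →* H :=
  PresentedGroup.toGroup (f := ![x, y]) (by rintro _ rfl; simp [h])

section lift

variable {H : Type*} [Group H] {x y : H} {h : x ^ r = y ^ s}

@[simp]
theorem lift_a : lift x y h (a r s) = x := PresentedGroup.toGroup.of _

@[simp]
theorem lift_b : lift x y h (b r s) = y := PresentedGroup.toGroup.of _

end lift

variable (r s)

theorem a_pow_eq_b_pow : a r s ^ r = b r s ^ s := by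
  have h := PresentedGroup.one_of_mem (rels := torusKnotRels r s) rfl
  rwa [map_mul, map_pow, map_inv, map_pow, mul_inv_eq_one] at h

theorem a_pow_mem_center : a r s ^ r ∈ Subgroup.center (TorusKnotGroup r s) := by
  refine Subgroup.mem_center_iff.2 fun g => Subgroup.mem_centralizer_singleton_iff.1 ?_
  refine PresentedGroup.generated_by _ _ (fun j => ?_) g
  rw [Subgroup.mem_centralizer_singleton_iff]
  fin_cases j
  · exact (Commute.self_pow _ _).eq
  · rw [a_pow_eq_b_pow]
    exact (Commute.self_pow _ _).eq

theorem not_isOfFinOrder_a_pow (hr : r ≠ 0) (hs : s ≠ 0) : ¬ IsOfFinOrder (a r s ^ r) := by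
  let ψ := lift (Multiplicative.ofAdd (s : ℤ)) (Multiplicative.ofAdd (r : ℤ)) (by
    rw [← ofAdd_nsmul, ← ofAdd_nsmul, nsmul_eq_mul, nsmul_eq_mul, mul_comm])
  intro h
  have hψ := ψ.isOfFinOrder h
  rw [isOfFinOrder_iff_eq_one, map_pow, lift_a, ← ofAdd_nsmul] at hψ
  simp [hr, hs] at hψ

instance : (Subgroup.zpowers (a r s ^ r)).Normal :=
  Subgroup.normal_of_le_center (Subgroup.zpowers_le.2 (a_pow_mem_center r s))

def toCoprod : TorusKnotGroup r s →* Multiplicative (ZMod r) ∗ Multiplicative (ZMod s) :=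
  lift (Coprod.inl (.ofAdd 1)) (Coprod.inr (.ofAdd 1)) (by
    simp only [← map_pow, ZMod.ofAdd_one_pow_self, map_one])

@[simp]
theorem toCoprod_a : toCoprod r s (a r s) = Coprod.inl (.ofAdd 1) := lift_a

@[simp]
theorem toCoprod_b : toCoprod r s (b r s) = Coprod.inr (.ofAdd 1) := lift_b

theorem toCoprod_a_pow : toCoprod r s (a r s ^ r) = 1 := by
  rw [map_pow, toCoprod_a, ← map_pow, ZMod.ofAdd_one_pow_self, map_one]

theorem mk_a_pow : (a r s : TorusKnotGroup r s ⧸ Subgroup.zpowers (a r s ^ r)) ^ r = 1 := by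
  rw [← QuotientGroup.mk_pow, QuotientGroup.eq_one_iff]
  exact Subgroup.mem_zpowers _

theorem mk_b_pow : (b r s : TorusKnotGroup r s ⧸ Subgroup.zpowers (a r s ^ r)) ^ s = 1 := by
  rw [← QuotientGroup.mk_pow, ← a_pow_eq_b_pow, QuotientGroup.mk_pow, mk_a_pow]

def ofCoprod : Multiplicative (ZMod r) ∗ Multiplicative (ZMod s) →*
    TorusKnotGroup r s ⧸ Subgroup.zpowers (a r s ^ r) :=
  Coprod.lift (ZMod.powMonoidHom r _ (mk_a_pow r s)) (ZMod.powMonoidHom s _ (mk_b_pow r s))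

def quotientEquivCoprod : TorusKnotGroup r s ⧸ Subgroup.zpowers (a r s ^ r) ≃*
    Multiplicative (ZMod r) ∗ Multiplicative (ZMod s) :=
  MonoidHom.toMulEquiv
    (QuotientGroup.lift _ (toCoprod r s) (Subgroup.zpowers_le.2 (toCoprod_a_pow r s)))
    (ofCoprod r s)
    (QuotientGroup.monoidHom_ext _ (PresentedGroup.ext fun j => by
      fin_cases j <;> simp [ofCoprod]))
    (Coprod.hom_ext (MonoidHom.ext_mzmod (by simp [ofCoprod]))
      (MonoidHom.ext_mzmod (by simp [ofCoprod])))

theorem center_eq_zpowers (hr : 2 ≤ r) (hs : 2 ≤ s) :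
    Subgroup.center (TorusKnotGroup r s) = Subgroup.zpowers (a r s ^ r) := by
  have : Fact (1 < r) := ⟨hr⟩
  have : Fact (1 < s) := ⟨hs⟩
  refine le_antisymm (Subgroup.center_le_of_center_quotient_eq_bot ?_)
    (Subgroup.zpowers_le.2 (a_pow_mem_center r s))
  exact Subgroup.center_eq_bot_of_mulEquiv (quotientEquivCoprod r s) Coprod.center_eq_bot

end TorusKnotGroup

theorem torus_knot_group_center_general (r s : ℕ) (hr : 2 ≤ r) (hs : 2 ≤ s) :
    ¬ IsOfFinOrder ((PresentedGroup.of 0 : PresentedGroup (torusKnotRels r s)) ^ r) ∧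
    Subgroup.center (PresentedGroup (torusKnotRels r s)) =
      Subgroup.zpowers ((PresentedGroup.of 0 : PresentedGroup (torusKnotRels r s)) ^ r) ∧
    Nonempty ((PresentedGroup (torusKnotRels r s) ⧸
        Subgroup.center (PresentedGroup (torusKnotRels r s))) ≃*
      Monoid.Coprod (Multiplicative (ZMod r)) (Multiplicative (ZMod s))) := by
  have hcenter := TorusKnotGroup.center_eq_zpowers r s hr hs
  refine ⟨TorusKnotGroup.not_isOfFinOrder_a_pow r s (by omega) (by omega), hcenter, ?_⟩
  exact ⟨(QuotientGroup.quotientMulEquivOfEq hcenter).trans (TorusKnotGroup.quotientEquivCoprod r s)⟩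

/-- Let `G = ⟨a, b ∣ a^r = b^s⟩` be the `(r,s)`-torus knot group, with `r, s`
coprime and `≥ 2`.  Then the center of `G` is the infinite cyclic subgroup
generated by `a^r = b^s`, and `G/Z(G)` is isomorphic to the free product
`ℤ/r * ℤ/s`. -/
theorem torus_knot_group_center (r s : ℕ) (hr : 2 ≤ r) (hs : 2 ≤ s)
    (hco : Nat.Coprime r s) :
    ¬ IsOfFinOrder ((PresentedGroup.of 0 : PresentedGroup (torusKnotRels r s)) ^ r) ∧
    Subgroup.center (PresentedGroup (torusKnotRels r s)) =
      Subgroup.zpowers ((PresentedGroup.of 0 : PresentedGroup (torusKnotRels r s)) ^ r) ∧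
    Nonempty ((PresentedGroup (torusKnotRels r s) ⧸
        Subgroup.center (PresentedGroup (torusKnotRels r s))) ≃*
      Monoid.Coprod (Multiplicative (ZMod r)) (Multiplicative (ZMod s))) :=
  torus_knot_group_center_general r s hr hs
end

section
/- Let X be a path-connected, locally path-connected, semi-locally simply connected space with universal covering p : Y → X, let F : X → X be a homeomorphism with F^n = id (n > 1), let σ be a path from x₀ to F(x₀), let σ̃ be the lift of σ starting at y₀ ∈ p⁻¹(x₀), and let F̃ be the unique lift of F with F̃(y₀) = σ̃(1). Then F̃^n = id_Y if and only if the loop τ = σ · (F∘σ) · (F²∘σ) ⋯ (F^{n-1}∘σ) represents the identity element of π₁(X, x₀). -/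
/-!
Since `F̃` lifts `F` and `σ̃` lifts `σ`, the concatenation
`τ̃ = σ̃ · (F̃∘σ̃) ⋯ (F̃^{n-1}∘σ̃)` is the lift of `τ` starting at `y₀`, and it ends at `F̃ⁿ(y₀)`.
In a simply connected covering space a loop downstairs is null-homotopic iff its lift closes up,
so `τ` is null-homotopic iff `F̃ⁿ(y₀) = y₀`. Finally `F̃ⁿ` is a lift of `Fⁿ = id`, so by unique
lifting it is the identity as soon as it fixes one point.
-/

/-- The path `τ⁽ⁿ⁾ = σ · (F∘σ) · (F²∘σ) ⋯ (F^{n-1}∘σ)` from `x₀` to `F^[n] x₀`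
obtained by concatenating the translates of `σ` under the iterates of `F`. -/
noncomputable def tauPath {X : Type*} [TopologicalSpace X] {F : X → X}
    (hF : Continuous F) {x₀ : X} (σ : Path x₀ (F x₀)) :
    (n : ℕ) → Path x₀ (F^[n] x₀)
  | 0 => Path.refl x₀
  | n + 1 =>
    (tauPath hF σ n).trans
      ((σ.map (hF.iterate n)).cast rfl (Function.iterate_succ_apply F n x₀))

theorem Function.Semiconj.apply_tauPath {X Y : Type*} [TopologicalSpace X]
    [TopologicalSpace Y] {F : X → X} {G : Y → Y} {p : Y → X} (hpG : Function.Semiconj p G F)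
    (hF : Continuous F) (hG : Continuous G) {y₀ : Y} (σ' : Path y₀ (G y₀))
    {σ : Path (p y₀) (F (p y₀))} (hσ : ∀ t, p (σ' t) = σ t) (k : ℕ) (t : unitInterval) :
    p (tauPath hG σ' k t) = tauPath hF σ k t := by
  induction k generalizing t with
  | zero => rfl
  | succ k ih =>
    simp only [tauPath, Path.trans_apply]
    split_ifs
    · exact ih _
    · simp only [Path.cast_coe, Path.map_coe, Function.comp_apply, (hpG.iterate_right k).eq, hσ]

theorem IsCoveringMap.map_homotopic_refl_iff {E X : Type*} [TopologicalSpace E]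
    [TopologicalSpace X] [SimplyConnectedSpace E] {p : E → X} (hp : IsCoveringMap p)
    {e₀ e₁ : E} (γ : Path e₀ e₁)
    {x : X} (h₀ : p e₀ = x) (h₁ : p e₁ = x) :
    ((γ.map hp.continuous).cast h₀.symm h₁.symm).Homotopic (Path.refl x) ↔ e₁ = e₀ := by
  subst h₀
  constructor
  · intro h
    have hγ : ⇑γ = hp.liftPath ((γ.map hp.continuous).cast rfl h₁.symm).toContinuousMap e₀
        (Path.source _) :=
      (hp.eq_liftPath_iff _).mpr ⟨γ.continuous, rfl, γ.source⟩
    have hrefl : (fun _ => e₀) = hp.liftPath (Path.refl (p e₀)).toContinuousMap e₀ rfl :=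
      (hp.eq_liftPath_iff _).mpr ⟨continuous_const, rfl, rfl⟩
    have hends := hp.liftPath_apply_one_eq_of_homotopicRel h e₀ (Path.source _) rfl
    rwa [← congr_fun hγ 1, ← congr_fun hrefl 1, γ.target] at hends
  · rintro rfl
    exact (SimplyConnectedSpace.paths_homotopic γ (Path.refl _)).map ⟨p, hp.continuous⟩

theorem lift_is_periodic_iff_loop_nullhomotopic_general {X Y : Type*}
    [TopologicalSpace X] [TopologicalSpace Y] [SimplyConnectedSpace Y]
    (p : Y → X) (hp : IsCoveringMap p) (F : Homeomorph X X) (n : ℕ)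
    (hFn : ∀ x, (⇑F)^[n] x = x) (x₀ : X) (y₀ y₁ : Y)
    (hy₀ : p y₀ = x₀) (σ : Path x₀ (F x₀)) (σt : Path y₀ y₁)
    (hσt : ∀ t, p (σt t) = σ t) (Ft : Y → Y) (hFtc : Continuous Ft)
    (hlift : p ∘ Ft = ⇑F ∘ p) (hbase : Ft y₀ = y₁) :
    (∀ y, Ft^[n] y = y) ↔
      ((tauPath F.continuous σ n).cast rfl (hFn x₀).symm).Homotopic
        (Path.refl x₀) := by
  subst hy₀ hbase
  have hsemi : Function.Semiconj p Ft F := fun y => congr_fun hlift y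
  have hlift_id : p ∘ Ft^[n] = p := funext fun y => (hsemi.iterate_right n y).trans (hFn _)
  have hτ : (tauPath F.continuous σ n).cast rfl (hFn (p y₀)).symm =
      ((tauPath hFtc σt n).map hp.continuous).cast rfl (congr_fun hlift_id y₀).symm := by
    ext t
    exact (hsemi.apply_tauPath F.continuous hFtc σt hσt n t).symm
  rw [hτ, hp.map_homotopic_refl_iff _ rfl (congr_fun hlift_id y₀)]
  refine ⟨fun h => h y₀, fun h => congr_fun ?_⟩
  exact hp.eq_of_comp_eq (hFtc.iterate n) continuous_id hlift_id y₀ h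

/-- Let `p : Y → X` be a universal covering (with `X` path connected and
locally path connected and `Y` simply connected), `F : X → X` an `n`-periodic
homeomorphism (`n > 1`), `σ` a path from `x₀` to `F(x₀)`, `σ̃` its lift
starting at `y₀ ∈ p⁻¹(x₀)`, and `F̃` the lift of `F` with `F̃(y₀) = σ̃(1)`.
Then `F̃` is `n`-periodic if and only if the loop
`τ = σ · (F∘σ) · (F²∘σ) ⋯ (F^{n-1}∘σ)` represents the identity element of
`π₁(X, x₀)`, i.e. is null-homotopic. -/
theorem lift_is_periodic_iff_loop_nullhomotopic {X Y : Type*}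
    [TopologicalSpace X] [TopologicalSpace Y] [PathConnectedSpace X]
    [LocallyPathConnectedSpace X] [SimplyConnectedSpace Y]
    (p : Y → X) (hp : IsCoveringMap p) (F : Homeomorph X X) (n : ℕ)
    (hn : 1 < n) (hFn : ∀ x, (⇑F)^[n] x = x) (x₀ : X) (y₀ y₁ : Y)
    (hy₀ : p y₀ = x₀) (σ : Path x₀ (F x₀)) (σt : Path y₀ y₁)
    (hσt : ∀ t, p (σt t) = σ t) (Ft : Y → Y) (hFtc : Continuous Ft)
    (hlift : p ∘ Ft = ⇑F ∘ p) (hbase : Ft y₀ = y₁) :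
    (∀ y, Ft^[n] y = y) ↔
      ((tauPath F.continuous σ n).cast rfl (hFn x₀).symm).Homotopic
        (Path.refl x₀) :=
  lift_is_periodic_iff_loop_nullhomotopic_general p hp F n hFn x₀ y₀ y₁ hy₀ σ σt hσt Ft hFtc hlift
    hbase
end
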